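/- arXiv:2007.03247 — 4 statements merged into one kernel-verified Lean document; each statement's English description precedes it below -/
import Mathlib

section
/- Let 𝒜 be a factor von Neumann algebra and A ∈ 𝒜. If AB - BA* ∈ ℂ·1 for every B ∈ 𝒜, then A ∈ ℂ·1. -/
/-- Let `M` be a factor von Neumann algebra and `a ∈ M`.  If `a*b - b*(star a) ∈ ℂ•1`
for every `b ∈ M`, then `a ∈ ℂ•1`. -/
theorem stmt2 {H : Type*} [NormedAddCommGroup H] [InnerProductSpace ℂ H] [CompleteSpace H]
    (M : VonNeumannAlgebra H)
    (hfactor : ∀ z ∈ M, (∀ w ∈ M, z * w = w * z) → ∃ c : ℂ, z = c • (1 : H →L[ℂ] H))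
    (a : H →L[ℂ] H) (ha : a ∈ M)
    (h : ∀ b ∈ M, ∃ c : ℂ, a * b - b * star a = c • (1 : H →L[ℂ] H)) :
    ∃ c : ℂ, a = c • (1 : H →L[ℂ] H) := by
  by_cases hc : ∀ b ∈ M, a * b - b * star a = 0
  · -- then star a = a and a is central, use factor hypothesis
    have h1 : a - star a = 0 := by simpa using hc 1 (one_mem M)
    have hsa : star a = a := by
      have := sub_eq_zero.mp h1
      exact this.symm
    apply hfactor a ha
    intro w hw
    have := hc w hw
    rw [hsa] at this
    exact sub_eq_zero.mp this
  · push_neg at hc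
    obtain ⟨b, hb, hb0⟩ := hc
    obtain ⟨c, hcb⟩ := h b hb
    have hcne : c ≠ 0 := by
      rintro rfl
      simp at hcb
      exact hb0 hcb
    obtain ⟨c', hc'⟩ := h (a * b) (mul_mem ha hb)
    -- a * (a*b - b*star a) = c • a
    have key : a * a * b - a * b * star a = c • a := by
      have := congrArg (fun x => a * x) hcb
      simpa [mul_sub, mul_assoc, mul_smul_comm] using this
    have : c • a = c' • (1 : H →L[ℂ] H) := by
      rw [← key, ← hc', mul_assoc]
    refine ⟨c⁻¹ * c', ?_⟩
    rw [mul_smul]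
    rw [← this, smul_smul, inv_mul_cancel₀ hcne, one_smul]
end

section
/- Let 𝒜 be a complex unital algebra and B ∈ 𝒜 with B³ = B. If additionally B²XB - BXB² = 0 for all X ∈ 𝒜, then with E₁ = (B² + B)/2 and E₂ = (B² - B)/2, both E₁ and E₂ are idempotents, E₁E₂ = E₂E₁ = 0, and E₁XE₂ = 0 for all X ∈ 𝒜. -/
/-- If `B³ = B` and `B²XB - BXB² = 0` for all `X`, then `E₁ = (B²+B)/2` and
`E₂ = (B²-B)/2` are idempotents, `E₁E₂ = E₂E₁ = 0`, and `E₁XE₂ = 0` for all `X`. -/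
theorem stmt3 {A : Type*} [Ring A] [Algebra ℂ A] (B : A)
    (h3 : B ^ 3 = B) (hc : ∀ X : A, B ^ 2 * X * B - B * X * B ^ 2 = 0) :
    ∀ E₁ E₂ : A, E₁ = ((2 : ℂ)⁻¹) • (B ^ 2 + B) → E₂ = ((2 : ℂ)⁻¹) • (B ^ 2 - B) →
      E₁ * E₁ = E₁ ∧ E₂ * E₂ = E₂ ∧ E₁ * E₂ = 0 ∧ E₂ * E₁ = 0 ∧
        ∀ X : A, E₁ * X * E₂ = 0 := by
  intro E₁ E₂ hE1 hE2
  subst hE1 hE2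
  have hc' : ∀ X : A, B ^ 2 * X * B = B * X * B ^ 2 := fun X => sub_eq_zero.mp (hc X)
  have h4 : B ^ 4 = B ^ 2 := by
    have : B ^ 4 = B ^ 3 * B := by noncomm_ring
    rw [this, h3, ← sq]
  refine ⟨?_, ?_, ?_, ?_, ?_⟩
  · rw [smul_mul_smul_comm]
    have : (B ^ 2 + B) * (B ^ 2 + B) = (2 : ℂ) • (B ^ 2 + B) := by
      have : (B ^ 2 + B) * (B ^ 2 + B) = B ^ 4 + B ^ 3 + B ^ 3 + B ^ 2 := by noncomm_ring
      rw [this, h4, h3]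
      rw [two_smul]; abel
    rw [this, smul_smul]
    norm_num
  · rw [smul_mul_smul_comm]
    have : (B ^ 2 - B) * (B ^ 2 - B) = (2 : ℂ) • (B ^ 2 - B) := by
      have : (B ^ 2 - B) * (B ^ 2 - B) = B ^ 4 - B ^ 3 - B ^ 3 + B ^ 2 := by noncomm_ring
      rw [this, h4, h3]
      rw [two_smul]; abel
    rw [this, smul_smul]
    norm_num
  · rw [smul_mul_smul_comm]
    have : (B ^ 2 + B) * (B ^ 2 - B) = 0 := by
      have : (B ^ 2 + B) * (B ^ 2 - B) = B ^ 4 + B ^ 3 - B ^ 3 - B ^ 2 := by noncomm_ring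
      rw [this, h4]; abel
    rw [this, smul_zero]
  · rw [smul_mul_smul_comm]
    have : (B ^ 2 - B) * (B ^ 2 + B) = 0 := by
      have : (B ^ 2 - B) * (B ^ 2 + B) = B ^ 4 - B ^ 3 + B ^ 3 - B ^ 2 := by noncomm_ring
      rw [this, h4]; abel
    rw [this, smul_zero]
  · intro X
    have key : (B ^ 2 + B) * X * (B ^ 2 - B) = 0 := by
      have h1 : B ^ 2 * X * B ^ 2 = B * X * B := by
        have := hc' (X * B)
        calc B ^ 2 * X * B ^ 2 = B ^ 2 * (X * B) * B := by noncomm_ring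
          _ = B * (X * B) * B ^ 2 := this
          _ = B * X * B ^ 3 := by noncomm_ring
          _ = B * X * B := by rw [h3]
      have expand : (B ^ 2 + B) * X * (B ^ 2 - B) =
          B ^ 2 * X * B ^ 2 - B ^ 2 * X * B + B * X * B ^ 2 - B * X * B := by
        noncomm_ring
      rw [expand, h1, hc' X]
      abel
    rw [smul_mul_assoc, smul_mul_assoc, mul_smul_comm, smul_smul, key, smul_zero]
end

section
/- Let 𝒜 be a prime complex unital algebra and B ∈ 𝒜 with B³ = B and B²XB = BXB² for all X ∈ 𝒜. Then B = E or B = -E for some idempotent E of 𝒜 (equivalently, one of E₁ = (B²+B)/2, E₂ = (B²-B)/2 is zero). -/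
/-- In a prime complex unital algebra, if `B³ = B` and `B²XB = BXB², for all `X`,
then `B = E` or `B = -E` for some idempotent `E`. -/
theorem stmt4 {A : Type*} [Ring A] [Algebra ℂ A]
    (hprime : ∀ x y : A, (∀ z : A, x * z * y = 0) → x = 0 ∨ y = 0)
    (B : A) (h3 : B ^ 3 = B) (hc : ∀ X : A, B ^ 2 * X * B = B * X * B ^ 2) :
    ∃ E : A, E * E = E ∧ (B = E ∨ B = -E) := by
  have key : ∀ X : A, (B ^ 2 - B) * X * (B ^ 2 + B) = 0 := by
    intro X
    have h1 : B ^ 2 * X * B ^ 2 = B * X * B := by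
      calc B ^ 2 * X * B ^ 2 = B ^ 2 * (X * B) * B := by noncomm_ring
        _ = B * (X * B) * B ^ 2 := hc (X * B)
        _ = B * X * B ^ 3 := by noncomm_ring
        _ = B * X * B := by rw [h3]
    have h2 := hc X
    calc (B ^ 2 - B) * X * (B ^ 2 + B)
        = (B ^ 2 * X * B ^ 2 - B * X * B) + (B ^ 2 * X * B - B * X * B ^ 2) := by noncomm_ring
      _ = 0 := by rw [h1, h2]; abel
  rcases hprime _ _ key with h | h
  · have hB : B * B = B := by
      have : B ^ 2 = B := by rwa [sub_eq_zero] at h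
      rw [← sq]; exact this
    exact ⟨B, hB, Or.inl rfl⟩
  · have hB2 : B ^ 2 = -B := eq_neg_of_add_eq_zero_left h
    refine ⟨-B, ?_, Or.inr (neg_neg B).symm⟩
    calc -B * -B = B ^ 2 := by noncomm_ring
      _ = -B := hB2
end

section
/- Let 𝒜 be a complex unital algebra and A ∈ 𝒜 with A² = λA + μ·1 for some λ, μ ∈ ℂ. If (A³ - A)U - 3A²UA + 3AUA² - U(A³ - A) = 0 for some U ∈ 𝒜, then (λ² + 4μ - 1)(AU - UA) = 0. -/
/-- If `A² = λA + μ•1` and `(A³-A)U - 3A²UA + 3AUA² - U(A³-A) = 0`, then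
`(λ²+4μ-1)(AU - UA) = 0`. -/
theorem stmt6 {𝒜 : Type*} [Ring 𝒜] [Algebra ℂ 𝒜] (A U : 𝒜) (lam mu : ℂ)
    (hA : A * A = lam • A + mu • (1 : 𝒜))
    (hU : (A ^ 3 - A) * U - (3 : ℂ) • (A ^ 2 * U * A) + (3 : ℂ) • (A * U * A ^ 2)
        - U * (A ^ 3 - A) = 0) :
    (lam ^ 2 + 4 * mu - 1) • (A * U - U * A) = 0 := by
  have h2 : A ^ 2 = lam • A + mu • (1 : 𝒜) := by rw [sq, hA]
  have h3 : A ^ 3 = (lam ^ 2 + mu) • A + (lam * mu) • (1 : 𝒜) := by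
    rw [pow_succ, h2, add_mul, smul_mul_assoc, hA, smul_mul_assoc, one_mul,
      smul_add, smul_smul]
    module
  have key : (lam ^ 2 + 4 * mu - 1) • (A * U - U * A)
      = (A ^ 3 - A) * U - (3 : ℂ) • (A ^ 2 * U * A) + (3 : ℂ) • (A * U * A ^ 2)
        - U * (A ^ 3 - A) := by
    rw [h2, h3]
    simp only [add_mul, mul_add, sub_mul, mul_sub, smul_mul_assoc, mul_smul_comm,
      smul_add, smul_sub, smul_smul, one_mul, mul_one]
    module
  rw [key, hU]
end
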